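/- Let k be an algebraically closed field of characteristic 2, N ≥ 3 odd with N + 1 = 2r, and Z ⊂ P^N_k the complete intersection of the quadrics q = Σ_{i=1}^r X_i Y_i and q' = Σ_{i=1}^r (a_i X_i Y_i + c_i X_i² + d_i Y_i²) in coordinates X_1, ..., X_r, Y_1, ..., Y_r. For any diagonal r×r matrix D over k, the matrix g = Id + ε·diag(D, D) over the dual numbers k[ε]/(ε²) preserves the span of q and q' under substitution. Consequently, the tangent space at the identity of the group of linear transformations preserving {q, q'} has dimension at least r, and the tangent space at the identity of the projective automorphism group of Z has dimension at least (N-1)/2. -/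

import Mathlib

/-!
Over the dual numbers, `Id + ε·diag(D, D)` is the diagonal substitution scaling both `Xᵢ` and `Yᵢ`
by `tᵢ = 1 + ε Dᵢ`. Every monomial of `q` and `q'` is one of `XᵢYᵢ`, `Xᵢ²`, `Yᵢ²`, so it gets
multiplied by `tᵢ² = 1 + 2ε Dᵢ = 1` in characteristic `2`: the substitution fixes `q` and `q'`
themselves. The dimension bound is rank–nullity for the quotient of `kʳ` by the line of constants.
-/

open MvPolynomial

noncomputable section

/-- Substitution of variables by the linear forms given by the rows of a matrix. -/
def substMatrix {ι R : Type} [Fintype ι] [DecidableEq ι] [CommSemiring R]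
    (g : Matrix ι ι R) (P : MvPolynomial ι R) : MvPolynomial ι R :=
  MvPolynomial.bind₁ (fun j => ∑ i, MvPolynomial.C (g j i) * MvPolynomial.X i) P

/-- The block diagonal matrix `diag(D, D)` on the index type `Fin r ⊕ Fin r`. -/
def doubleDiag {k : Type} [Field k] {r : ℕ} (D : Fin r → k) :
    Matrix (Fin r ⊕ Fin r) (Fin r ⊕ Fin r) k :=
  Matrix.of fun x y => if x = y then Sum.elim D D x else 0

theorem substMatrix_diagonal {ι R : Type} [Fintype ι] [DecidableEq ι] [CommSemiring R]
    (s : ι → R) (P : MvPolynomial ι R) :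
    substMatrix (Matrix.diagonal s) P = bind₁ (fun j => C (s j) * X j) P := by
  simp [substMatrix, Matrix.diagonal_apply, apply_ite C, ite_mul]

section doubleDiag

variable {k : Type} [Field k] {r : ℕ}

theorem doubleDiag_eq_diagonal (D : Fin r → k) : doubleDiag D = Matrix.diagonal (Sum.elim D D) :=
  rfl

theorem doubleDiag_injective : Function.Injective (doubleDiag : (Fin r → k) → _) :=
  fun _ _ h => funext fun i => congrFun (Matrix.diagonal_injective h) (Sum.inl i)

theorem one_add_eps_smul_doubleDiag_map (D : Fin r → k) :
    1 + (DualNumber.eps : DualNumber k) • (doubleDiag D).map (algebraMap k (DualNumber k)) =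
      Matrix.diagonal (Sum.elim (fun i => 1 + DualNumber.eps * algebraMap k _ (D i))
        (fun i => 1 + DualNumber.eps * algebraMap k _ (D i))) := by
  rw [doubleDiag_eq_diagonal, Matrix.diagonal_map (map_zero _), ← Matrix.diagonal_smul,
    ← Matrix.diagonal_one, Matrix.diagonal_add]
  congr 1
  ext (i | i) <;> rfl

end doubleDiag

theorem DualNumber.one_add_eps_mul_sq {R : Type} [CommRing R] [CharP R 2] (x : DualNumber R) :
    (1 + DualNumber.eps * x) ^ 2 = 1 := by
  have h2 : (2 : DualNumber R) = 0 := by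
    rw [← (map_ofNat (algebraMap R (DualNumber R)) 2), CharTwo.two_eq_zero (R := R), map_zero]
  linear_combination (DualNumber.eps * x) * h2 + x ^ 2 * DualNumber.eps_mul_eps (R := R)

section pairedQuadric

variable {R : Type} [CommSemiring R] {r : ℕ}

def pairedQuadric (a c d : Fin r → R) : MvPolynomial (Fin r ⊕ Fin r) R :=
  ∑ i, (C (a i) * X (Sum.inl i) * X (Sum.inr i) + C (c i) * X (Sum.inl i) ^ 2 +
    C (d i) * X (Sum.inr i) ^ 2)

theorem pairedQuadric_one_zero_zero :
    pairedQuadric (1 : Fin r → R) 0 0 = ∑ i, X (Sum.inl i) * X (Sum.inr i) := by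
  simp [pairedQuadric]

theorem map_pairedQuadric {S : Type} [CommSemiring S] (f : R →+* S) (a c d : Fin r → R) :
    map f (pairedQuadric a c d) = pairedQuadric (f ∘ a) (f ∘ c) (f ∘ d) := by
  simp [pairedQuadric]

theorem bind₁_scale_pairedQuadric {t : Fin r → R} (ht : ∀ i, t i ^ 2 = 1) (a c d : Fin r → R) :
    bind₁ (fun j => C (Sum.elim t t j) * X j) (pairedQuadric a c d) = pairedQuadric a c d := by
  have hsq : ∀ i, (C (t i) : MvPolynomial (Fin r ⊕ Fin r) R) ^ 2 = 1 := fun i => by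
    rw [← map_pow, ht, map_one]
  simp only [pairedQuadric, map_sum, map_add, map_mul, map_pow, bind₁_C_right, bind₁_X_right,
    Sum.elim_inl, Sum.elim_inr]
  refine Finset.sum_congr rfl fun i _ => ?_
  calc _ = (C (a i) * X (Sum.inl i) * X (Sum.inr i) + C (c i) * X (Sum.inl i) ^ 2 +
        C (d i) * X (Sum.inr i) ^ 2) * C (t i) ^ 2 := by ring
    _ = _ := by rw [hsq, mul_one]

end pairedQuadric

theorem substMatrix_one_add_eps_smul_doubleDiag_map_pairedQuadric {k : Type} [Field k] [CharP k 2]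
    {r : ℕ} (D a c d : Fin r → k) :
    substMatrix
        (1 + (DualNumber.eps : DualNumber k) • (doubleDiag D).map (algebraMap k (DualNumber k)))
        (map (algebraMap k (DualNumber k)) (pairedQuadric a c d)) =
      map (algebraMap k (DualNumber k)) (pairedQuadric a c d) := by
  rw [one_add_eps_smul_doubleDiag_map, substMatrix_diagonal, map_pairedQuadric]
  exact bind₁_scale_pairedQuadric (fun i => DualNumber.one_add_eps_mul_sq _) _ _ _

theorem finrank_quotient_span_singleton {K V : Type} [DivisionRing K] [AddCommGroup V] [Module K V]
    [FiniteDimensional K V] {v : V} (hv : v ≠ 0) :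
    Module.finrank K (V ⧸ K ∙ v) = Module.finrank K V - 1 := by
  rw [Submodule.finrank_quotient, finrank_span_singleton hv]

theorem tangent_space_of_automorphisms_of_intersection_of_two_quadrics_char_two_general
    (k : Type) [Field k] (hchar : ringChar k = 2)
    (N r : ℕ) (hNr : N + 1 = 2 * r)
    (a c' d' : Fin r → k) :
    (∀ D : Fin r → k,
      letI A := DualNumber k
      letI g : Matrix (Fin r ⊕ Fin r) (Fin r ⊕ Fin r) A :=
        1 + (DualNumber.eps : A) • ((doubleDiag D).map (algebraMap k A))
      letI qA : MvPolynomial (Fin r ⊕ Fin r) A :=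
        MvPolynomial.map (algebraMap k A)
          (∑ i, X (Sum.inl i) * X (Sum.inr i) : MvPolynomial (Fin r ⊕ Fin r) k)
      letI q'A : MvPolynomial (Fin r ⊕ Fin r) A :=
        MvPolynomial.map (algebraMap k A)
          (∑ i, (MvPolynomial.C (a i) * X (Sum.inl i) * X (Sum.inr i) +
            MvPolynomial.C (c' i) * X (Sum.inl i) ^ 2 +
            MvPolynomial.C (d' i) * X (Sum.inr i) ^ 2) : MvPolynomial (Fin r ⊕ Fin r) k)
      ∃ α β γ δ : A,
        substMatrix g qA = MvPolynomial.C α * qA + MvPolynomial.C β * q'A ∧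
        substMatrix g q'A = MvPolynomial.C γ * qA + MvPolynomial.C δ * q'A) ∧
    -- the family `D ↦ Id + ε·diag(D, D)` of tangent vectors is `r`-dimensional …
    Function.Injective (fun D : Fin r → k => doubleDiag D) ∧
    -- … so, modulo the one-dimensional space of homotheties (scalar matrices), the tangent
    -- space at the identity of the projective automorphism group of `Z` has dimension at
    -- least `(N - 1) / 2`
    (((N - 1) / 2 : ℕ) : Cardinal) ≤ Module.rank k
      ((Fin r → k) ⧸ (Submodule.span k {fun _ => (1 : k)})) := by
  have := ringChar.of_eq hchar
  refine ⟨fun D => ⟨1, 0, 0, 1, ?_, ?_⟩, doubleDiag_injective, ?_⟩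
  · rw [← pairedQuadric_one_zero_zero, map_one, map_zero, one_mul, zero_mul, add_zero]
    exact substMatrix_one_add_eps_smul_doubleDiag_map_pairedQuadric D 1 0 0
  · rw [map_one, map_zero, one_mul, zero_mul, zero_add]
    exact substMatrix_one_add_eps_smul_doubleDiag_map_pairedQuadric D a c' d'
  · have : Nonempty (Fin r) := ⟨⟨0, by omega⟩⟩
    have hone : (fun _ => (1 : k) : Fin r → k) ≠ 0 := Function.const_ne_zero.mpr one_ne_zero
    rw [← Module.finrank_eq_rank, finrank_quotient_span_singleton hone, Module.finrank_fin_fun]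
    exact_mod_cast (by omega : (N - 1) / 2 ≤ r - 1)

theorem tangent_space_of_automorphisms_of_intersection_of_two_quadrics_char_two
    (k : Type) [Field k] [IsAlgClosed k] (hchar : ringChar k = 2)
    (N r : ℕ) (hN : 3 ≤ N) (hNr : N + 1 = 2 * r)
    (a c' d' : Fin r → k) :
    (∀ D : Fin r → k,
      letI A := DualNumber k
      letI g : Matrix (Fin r ⊕ Fin r) (Fin r ⊕ Fin r) A :=
        1 + (DualNumber.eps : A) • ((doubleDiag D).map (algebraMap k A))
      letI qA : MvPolynomial (Fin r ⊕ Fin r) A :=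
        MvPolynomial.map (algebraMap k A)
          (∑ i, X (Sum.inl i) * X (Sum.inr i) : MvPolynomial (Fin r ⊕ Fin r) k)
      letI q'A : MvPolynomial (Fin r ⊕ Fin r) A :=
        MvPolynomial.map (algebraMap k A)
          (∑ i, (MvPolynomial.C (a i) * X (Sum.inl i) * X (Sum.inr i) +
            MvPolynomial.C (c' i) * X (Sum.inl i) ^ 2 +
            MvPolynomial.C (d' i) * X (Sum.inr i) ^ 2) : MvPolynomial (Fin r ⊕ Fin r) k)
      ∃ α β γ δ : A,
        substMatrix g qA = MvPolynomial.C α * qA + MvPolynomial.C β * q'A ∧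
        substMatrix g q'A = MvPolynomial.C γ * qA + MvPolynomial.C δ * q'A) ∧
    -- the family `D ↦ Id + ε·diag(D, D)` of tangent vectors is `r`-dimensional …
    Function.Injective (fun D : Fin r → k => doubleDiag D) ∧
    -- … so, modulo the one-dimensional space of homotheties (scalar matrices), the tangent
    -- space at the identity of the projective automorphism group of `Z` has dimension at
    -- least `(N - 1) / 2`
    (((N - 1) / 2 : ℕ) : Cardinal) ≤ Module.rank k
      ((Fin r → k) ⧸ (Submodule.span k {fun _ => (1 : k)})) :=
  tangent_space_of_automorphisms_of_intersection_of_two_quadrics_char_two_general k hchar N r hNr a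
    c' d'

end
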